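/- arXiv:1212.6906 — 4 statements merged into one kernel-verified Lean document; each statement's English description precedes it below -/
import Mathlib

section
/- The third partial derivatives of the smooth max function satisfy ∂_j ∂_k ∂_l F_β(z) = β² q_{jkl}(z), where q_{jkl}(z) = π_j δ_{jl} δ_{jk} − π_j π_l δ_{jk} − π_j π_k (δ_{jl} + δ_{kl}) + 2 π_j π_k π_l evaluated at z, and ∑_{j,k,l=1}^p |q_{jkl}(z)| ≤ 6. -/
/-!
Along the coordinate `z_l` the quotient rule gives `∂_l π_j = β π_j (δ_{jl} − π_l)`, and the
product rule applied to `β w_{jk} = β (π_j δ_{jk} − π_j π_k)` then yields `β² q_{jkl}`.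
For the bound, the triangle inequality replaces each of the four monomials of `q_{jkl}` by its
(nonnegative) absolute value; summed over `j, k, l`, and using `∑ π = 1`, these contribute
`1 + 1 + 2 + 2 = 6`.
-/

/-- The softmax weights `π_j(z) = exp(β z_j) / ∑_m exp(β z_m)`. -/
noncomputable def softmaxWeight (p : ℕ) (β : ℝ) (z : Fin p → ℝ) (j : Fin p) : ℝ :=
  Real.exp (β * z j) / ∑ m, Real.exp (β * z m)

/-- Kronecker delta. -/
def kdelta {p : ℕ} (j k : Fin p) : ℝ := if j = k then 1 else 0

/-- `w_{jk}(z) = π_j(z) δ_{jk} − π_j(z) π_k(z)`. -/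
noncomputable def softmaxHessian (p : ℕ) (β : ℝ) (z : Fin p → ℝ) (j k : Fin p) : ℝ :=
  softmaxWeight p β z j * kdelta j k - softmaxWeight p β z j * softmaxWeight p β z k

/-- `q_{jkl}(z) = π_j δ_{jl} δ_{jk} − π_j π_l δ_{jk} − π_j π_k (δ_{jl} + δ_{kl}) + 2 π_j π_k π_l`. -/
noncomputable def softmaxThird (p : ℕ) (β : ℝ) (z : Fin p → ℝ) (j k l : Fin p) : ℝ :=
  softmaxWeight p β z j * kdelta j l * kdelta j k
    - softmaxWeight p β z j * softmaxWeight p β z l * kdelta j k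
    - softmaxWeight p β z j * softmaxWeight p β z k * (kdelta j l + kdelta k l)
    + 2 * softmaxWeight p β z j * softmaxWeight p β z k * softmaxWeight p β z l

section Softmax

variable {p : ℕ} (β : ℝ) (z : Fin p → ℝ)

lemma kdelta_nonneg (j k : Fin p) : 0 ≤ kdelta j k := by
  unfold kdelta; split_ifs <;> norm_num

lemma softmaxWeight_nonneg (j : Fin p) : 0 ≤ softmaxWeight p β z j := by
  unfold softmaxWeight; positivity

lemma sum_exp_pos [Nonempty (Fin p)] : 0 < ∑ m, Real.exp (β * z m) :=
  Finset.sum_pos (fun _ _ => Real.exp_pos _) Finset.univ_nonempty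

lemma sum_softmaxWeight [Nonempty (Fin p)] : ∑ j, softmaxWeight p β z j = 1 := by
  simp only [softmaxWeight, ← Finset.sum_div, div_self (sum_exp_pos β z).ne']

lemma hasDerivAt_exp_update (l m : Fin p) :
    HasDerivAt (fun s => Real.exp (β * Function.update z l s m))
      (β * kdelta m l * Real.exp (β * z m)) (z l) := by
  by_cases hm : m = l
  · subst hm
    simpa [kdelta, mul_comm] using ((hasDerivAt_id (z m)).const_mul β).exp
  · simpa [Function.update_of_ne hm, kdelta, hm] using hasDerivAt_const (z l) (Real.exp (β * z m))

lemma hasDerivAt_softmaxWeight_update [Nonempty (Fin p)] (j l : Fin p) :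
    HasDerivAt (fun s => softmaxWeight p β (Function.update z l s) j)
      (β * softmaxWeight p β z j * (kdelta j l - softmaxWeight p β z l)) (z l) := by
  have hden : HasDerivAt (fun s => ∑ m, Real.exp (β * Function.update z l s m))
      (β * Real.exp (β * z l)) (z l) := by
    simpa [kdelta] using
      HasDerivAt.fun_sum (u := Finset.univ) fun m _ => hasDerivAt_exp_update β z l m
  have hquot := (hasDerivAt_exp_update β z l j).fun_div hden (by simpa using (sum_exp_pos β z).ne')
  simp only [Function.update_eq_self] at hquot
  refine hquot.congr_deriv ?_
  unfold softmaxWeight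
  field_simp

lemma hasDerivAt_softmaxHessian_update [Nonempty (Fin p)] (j k l : Fin p) :
    HasDerivAt (fun s => β * softmaxHessian p β (Function.update z l s) j k)
      (β ^ 2 * softmaxThird p β z j k l) (z l) := by
  have hj := hasDerivAt_softmaxWeight_update β z j l
  have hk := hasDerivAt_softmaxWeight_update β z k l
  have h := ((hj.mul_const (kdelta j k)).fun_sub (hj.fun_mul hk)).const_mul β
  simp only [Function.update_eq_self] at h
  refine h.congr_deriv ?_
  rw [softmaxThird]
  ring

noncomputable def softmaxThirdMajorant (j k l : Fin p) : ℝ :=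
  softmaxWeight p β z j * kdelta j l * kdelta j k
    + softmaxWeight p β z j * softmaxWeight p β z l * kdelta j k
    + softmaxWeight p β z j * softmaxWeight p β z k * (kdelta j l + kdelta k l)
    + 2 * softmaxWeight p β z j * softmaxWeight p β z k * softmaxWeight p β z l

lemma abs_softmaxThird_le_majorant (j k l : Fin p) :
    |softmaxThird p β z j k l| ≤ softmaxThirdMajorant β z j k l := by
  have hπ := softmaxWeight_nonneg β z
  have hδ := kdelta_nonneg (p := p)
  have h1 := mul_nonneg (mul_nonneg (hπ j) (hδ j l)) (hδ j k)
  have h2 := mul_nonneg (mul_nonneg (hπ j) (hπ l)) (hδ j k)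
  have h3 := mul_nonneg (mul_nonneg (hπ j) (hπ k)) (add_nonneg (hδ j l) (hδ k l))
  have h4 := mul_nonneg (mul_nonneg (mul_nonneg zero_le_two (hπ j)) (hπ k)) (hπ l)
  rw [softmaxThird, softmaxThirdMajorant, abs_le]
  constructor <;> linarith

lemma sum_softmaxThirdMajorant [Nonempty (Fin p)] :
    ∑ j, ∑ k, ∑ l, softmaxThirdMajorant β z j k l = 6 := by
  norm_num [softmaxThirdMajorant, Finset.sum_add_distrib, mul_add, kdelta, ← Finset.mul_sum,
    sum_softmaxWeight]

end Softmax

theorem smooth_max_third_derivative_general (p : ℕ) (β : ℝ)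
    (z : Fin p → ℝ) (j k l : Fin p) :
    HasDerivAt
      (fun s : ℝ => β * softmaxHessian p β (Function.update z l s) j k)
      (β ^ 2 * softmaxThird p β z j k l) (z l) ∧
    (∑ j', ∑ k', ∑ l', |softmaxThird p β z j' k' l'|) ≤ 6 := by
  have : Nonempty (Fin p) := ⟨j⟩
  refine ⟨hasDerivAt_softmaxHessian_update β z j k l, ?_⟩
  calc ∑ j', ∑ k', ∑ l', |softmaxThird p β z j' k' l'|
      ≤ ∑ j', ∑ k', ∑ l', softmaxThirdMajorant β z j' k' l' := by
        gcongr with j' _ k' _ l' _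
        exact abs_softmaxThird_le_majorant β z j' k' l'
    _ = 6 := sum_softmaxThirdMajorant β z

/-- The third partial derivatives of the smooth max function satisfy
`∂_j ∂_k ∂_l F_β(z) = β² q_{jkl}(z)` (i.e. `∂_l (β w_{jk})(z) = β² q_{jkl}(z)`),
and `∑_{j,k,l} |q_{jkl}(z)| ≤ 6`. -/
theorem smooth_max_third_derivative (p : ℕ) (hp : 0 < p) (β : ℝ) (hβ : 0 < β)
    (z : Fin p → ℝ) (j k l : Fin p) :
    HasDerivAt
      (fun s : ℝ => β * softmaxHessian p β (Function.update z l s) j k)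
      (β ^ 2 * softmaxThird p β z j k l) (z l) ∧
    (∑ j', ∑ k', ∑ l', |softmaxThird p β z j' k' l'|) ≤ 6 :=
  smooth_max_third_derivative_general p β z j k l
end

section
/- Truncation impact on second moments: for every 1 ≤ j, k ≤ p, Ē[|x̃_{ij} x̃_{ik} − x_{ij} x_{ik}|] ≤ (3/2)(Ē[x_{ij}²] + Ē[x_{ik}²]) φ(u), where φ(u) ≥ 0 is any number such that Ē[x_{ij}² 1{|x_{ij}| > u (Ē[x_{ij}²])^{1/2}}] ≤ φ(u)² Ē[x_{ij}²] for all j. -/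
open MeasureTheory

/-- Average (over `i`) second moment `Ē[x_{ij}²] = n⁻¹ ∑_i E[x_{ij}²]`. -/
noncomputable def avgSecondMoment {Ω : Type*} [MeasurableSpace Ω] (μ : Measure Ω)
    (n p : ℕ) (x : Fin n → Fin p → Ω → ℝ) (j : Fin p) : ℝ :=
  (n : ℝ)⁻¹ * ∑ i, ∫ ω, (x i j ω) ^ 2 ∂μ

/-- The truncated variable
`x̃_{ij} = x_{ij} 1{|x_{ij}| ≤ u (Ē[x_{ij}²])^{1/2}} − E[x_{ij} 1{|x_{ij}| ≤ u (Ē[x_{ij}²])^{1/2}}]`. -/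
noncomputable def truncVar {Ω : Type*} [MeasurableSpace Ω] (μ : Measure Ω)
    (n p : ℕ) (x : Fin n → Fin p → Ω → ℝ) (u : ℝ) (i : Fin n) (j : Fin p)
    (ω : Ω) : ℝ :=
  (if |x i j ω| ≤ u * Real.sqrt (avgSecondMoment μ n p x j) then x i j ω else 0) -
    ∫ ω', (if |x i j ω'| ≤ u * Real.sqrt (avgSecondMoment μ n p x j)
      then x i j ω' else 0) ∂μ

open ProbabilityTheory

/-!
Write `x̃ = x - D` with `D = T - E T` the centred tail `T = x 1{|x| > c}`; this is where `E x = 0`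
enters. Then `x̃_j x̃_k - x_j x_k = -D_j x̃_k - x_j D_k`, so by Cauchy–Schwarz in `ω`, and since
centring and truncation do not increase second moments, its mean absolute value is at most
`‖T_j‖₂ ‖x_k‖₂ + ‖x_j‖₂ ‖T_k‖₂`. Cauchy–Schwarz in `i` and the hypothesis on `φ` then bound the
average over `i` by `2 φ (Ē[x_j²] Ē[x_k²])^{1/2} ≤ φ (Ē[x_j²] + Ē[x_k²])`.
-/

section

variable {Ω : Type*}

noncomputable def truncAt (c : ℝ) (f : Ω → ℝ) (ω : Ω) : ℝ := if |f ω| ≤ c then f ω else 0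

lemma sub_truncAt_sq (c : ℝ) (f : Ω → ℝ) (ω : Ω) :
    (f ω - truncAt c f ω) ^ 2 = if c < |f ω| then f ω ^ 2 else 0 := by
  rcases le_or_gt |f ω| c with h | h
  · simp [truncAt, h, not_lt.2 h]
  · simp [truncAt, h, not_le.2 h]

variable [MeasurableSpace Ω] {μ : Measure Ω}

noncomputable def centeredTruncAt (μ : Measure Ω) (c : ℝ) (f : Ω → ℝ) (ω : Ω) : ℝ :=
  truncAt c f ω - ∫ ω', truncAt c f ω' ∂μ

lemma integral_abs_mul_le_sqrt_mul_sqrt {f g : Ω → ℝ} (hf : MemLp f 2 μ) (hg : MemLp g 2 μ) :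
    ∫ ω, |f ω * g ω| ∂μ ≤ √(∫ ω, f ω ^ 2 ∂μ) * √(∫ ω, g ω ^ 2 ∂μ) := by
  have h := integral_mul_norm_le_Lp_mul_Lq Real.HolderConjugate.two_two
    (by simpa using hf) (by simpa using hg)
  simp only [Real.norm_eq_abs, Real.rpow_two, sq_abs, ← abs_mul] at h
  rwa [Real.sqrt_eq_rpow, Real.sqrt_eq_rpow]

lemma integral_abs_mul_sub_mul_le {f f' g g' : Ω → ℝ} (hf : MemLp f 2 μ) (hf' : MemLp f' 2 μ)
    (hg : MemLp g 2 μ) (hg' : MemLp g' 2 μ) :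
    ∫ ω, |f' ω * g' ω - f ω * g ω| ∂μ ≤
      √(∫ ω, (f' ω - f ω) ^ 2 ∂μ) * √(∫ ω, g' ω ^ 2 ∂μ) +
        √(∫ ω, f ω ^ 2 ∂μ) * √(∫ ω, (g' ω - g ω) ^ 2 ∂μ) := by
  have hdf := hf'.sub hf
  have hdg := hg'.sub hg
  calc ∫ ω, |f' ω * g' ω - f ω * g ω| ∂μ
      ≤ ∫ ω, (|(f' ω - f ω) * g' ω| + |f ω * (g' ω - g ω)|) ∂μ := by
        refine integral_mono (((hf'.integrable_mul hg').sub (hf.integrable_mul hg)).abs)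
          ((hdf.integrable_mul hg').abs.add (hf.integrable_mul hdg).abs) fun ω => ?_
        calc |f' ω * g' ω - f ω * g ω| = |(f' ω - f ω) * g' ω + f ω * (g' ω - g ω)| := by
              congr 1; ring
          _ ≤ _ := abs_add_le _ _
    _ = ∫ ω, |(f' ω - f ω) * g' ω| ∂μ + ∫ ω, |f ω * (g' ω - g ω)| ∂μ :=
        integral_add (hdf.integrable_mul hg').abs (hf.integrable_mul hdg).abs
    _ ≤ _ := add_le_add (integral_abs_mul_le_sqrt_mul_sqrt hdf hg')
        (integral_abs_mul_le_sqrt_mul_sqrt hf hdg)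

lemma integral_sq_sub_integral_le [IsProbabilityMeasure μ] {f : Ω → ℝ} (hf : MemLp f 2 μ) :
    ∫ ω, (f ω - ∫ ω', f ω' ∂μ) ^ 2 ∂μ ≤ ∫ ω, f ω ^ 2 ∂μ := by
  simpa [variance_eq_integral hf.aestronglyMeasurable.aemeasurable] using
    variance_le_expectation_sq hf.aestronglyMeasurable (μ := μ)

lemma MeasureTheory.MemLp.truncAt {p : ENNReal} {f : Ω → ℝ} (hf : MemLp f p μ) (c : ℝ) :
    MemLp (truncAt c f) p μ := by
  have hmeas : Measurable fun y : ℝ => if |y| ≤ c then y else 0 :=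
    Measurable.ite (measurableSet_le measurable_id.abs measurable_const) measurable_id
      measurable_const
  refine hf.of_le
    (hmeas.comp_aemeasurable hf.aestronglyMeasurable.aemeasurable).aestronglyMeasurable
    (.of_forall fun ω => ?_)
  unfold _root_.truncAt
  split_ifs <;> simp

variable [IsProbabilityMeasure μ]

lemma MeasureTheory.MemLp.centeredTruncAt {f : Ω → ℝ} (hf : MemLp f 2 μ) (c : ℝ) :
    MemLp (centeredTruncAt μ c f) 2 μ :=
  (hf.truncAt c).sub (memLp_const _)

lemma integral_sq_centeredTruncAt_le {f : Ω → ℝ} (hf : MemLp f 2 μ) (c : ℝ) :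
    ∫ ω, centeredTruncAt μ c f ω ^ 2 ∂μ ≤ ∫ ω, f ω ^ 2 ∂μ :=
  calc ∫ ω, centeredTruncAt μ c f ω ^ 2 ∂μ ≤ ∫ ω, truncAt c f ω ^ 2 ∂μ :=
        integral_sq_sub_integral_le (hf.truncAt c)
    _ ≤ ∫ ω, f ω ^ 2 ∂μ := by
        refine integral_mono (hf.truncAt c).integrable_sq hf.integrable_sq fun ω => ?_
        unfold truncAt
        split_ifs <;> simp [sq_nonneg]

lemma integral_sq_centeredTruncAt_sub_le {f : Ω → ℝ} (hf : MemLp f 2 μ)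
    (hf0 : ∫ ω, f ω ∂μ = 0) (c : ℝ) :
    ∫ ω, (centeredTruncAt μ c f ω - f ω) ^ 2 ∂μ ≤
      ∫ ω, (if c < |f ω| then f ω ^ 2 else 0) ∂μ := by
  have hT : MemLp (fun ω => f ω - truncAt c f ω) 2 μ := hf.sub (hf.truncAt c)
  have hmean : ∫ ω, (f ω - truncAt c f ω) ∂μ = -∫ ω, truncAt c f ω ∂μ := by
    rw [integral_sub (hf.integrable one_le_two) ((hf.truncAt c).integrable one_le_two), hf0,
      zero_sub]
  calc ∫ ω, (centeredTruncAt μ c f ω - f ω) ^ 2 ∂μ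
      = ∫ ω, (f ω - truncAt c f ω - ∫ ω', (f ω' - truncAt c f ω') ∂μ) ^ 2 ∂μ := by
        congr 1 with ω
        rw [hmean, centeredTruncAt]
        ring
    _ ≤ ∫ ω, (f ω - truncAt c f ω) ^ 2 ∂μ := integral_sq_sub_integral_le hT
    _ = ∫ ω, (if c < |f ω| then f ω ^ 2 else 0) ∂μ := by simp only [sub_truncAt_sq]

lemma integral_abs_centeredTruncAt_mul_sub_mul_le {f g : Ω → ℝ} (hf : MemLp f 2 μ)
    (hg : MemLp g 2 μ) (hf0 : ∫ ω, f ω ∂μ = 0) (hg0 : ∫ ω, g ω ∂μ = 0) (c d : ℝ) :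
    ∫ ω, |centeredTruncAt μ c f ω * centeredTruncAt μ d g ω - f ω * g ω| ∂μ ≤
      √(∫ ω, (if c < |f ω| then f ω ^ 2 else 0) ∂μ) * √(∫ ω, g ω ^ 2 ∂μ) +
        √(∫ ω, f ω ^ 2 ∂μ) * √(∫ ω, (if d < |g ω| then g ω ^ 2 else 0) ∂μ) := by
  refine (integral_abs_mul_sub_mul_le hf (hf.centeredTruncAt c) hg
    (hg.centeredTruncAt d)).trans ?_
  gcongr √?_ * √?_ + _ * √?_
  · exact integral_sq_centeredTruncAt_sub_le hf hf0 c
  · exact integral_sq_centeredTruncAt_le hg d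
  · exact integral_sq_centeredTruncAt_sub_le hg hg0 d

end

lemma Finset.mul_sum_sqrt_mul_sqrt_le {ι : Type*} (s : Finset ι) {c : ℝ} (hc : 0 ≤ c)
    {a b : ι → ℝ} (ha : ∀ i, 0 ≤ a i) (hb : ∀ i, 0 ≤ b i) :
    c * ∑ i ∈ s, √(a i) * √(b i) ≤ √(c * ∑ i ∈ s, a i) * √(c * ∑ i ∈ s, b i) := by
  rw [Real.sqrt_mul hc, Real.sqrt_mul hc, mul_mul_mul_comm, Real.mul_self_sqrt hc]
  exact mul_le_mul_of_nonneg_left (Real.sum_sqrt_mul_sqrt_le s ha hb) hc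

theorem truncation_second_moment_impact_general {Ω : Type*} [MeasurableSpace Ω]
    (μ : Measure Ω) [IsProbabilityMeasure μ] (n p : ℕ)
    (x : Fin n → Fin p → Ω → ℝ)
    (hmeas : ∀ i j, Measurable (x i j))
    (hcen : ∀ i j, ∫ ω, x i j ω ∂μ = 0)
    (hint2 : ∀ i j, Integrable (fun ω => (x i j ω) ^ 2) μ)
    (u : ℝ) (φ : ℝ) (hφ : 0 ≤ φ)
    (hφ2 : ∀ j, (n : ℝ)⁻¹ * ∑ i, ∫ ω,
        (if u * Real.sqrt (avgSecondMoment μ n p x j) < |x i j ω|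
          then (x i j ω) ^ 2 else 0) ∂μ ≤ φ ^ 2 * avgSecondMoment μ n p x j)
    (j k : Fin p) :
    (n : ℝ)⁻¹ * ∑ i, ∫ ω,
        |truncVar μ n p x u i j ω * truncVar μ n p x u i k ω -
          x i j ω * x i k ω| ∂μ ≤
      (3 / 2) * (avgSecondMoment μ n p x j + avgSecondMoment μ n p x k) * φ := by
  set σ := avgSecondMoment μ n p x
  set α : Fin n → Fin p → ℝ := fun i l =>
    ∫ ω, (if u * √(σ l) < |x i l ω| then x i l ω ^ 2 else 0) ∂μ
  set β : Fin n → Fin p → ℝ := fun i l => ∫ ω, x i l ω ^ 2 ∂μ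
  have hL2 : ∀ i l, MemLp (x i l) 2 μ := fun i l =>
    (memLp_two_iff_integrable_sq (hmeas i l).aestronglyMeasurable).2 (hint2 i l)
  have hα : ∀ i l, 0 ≤ α i l := fun i l => integral_nonneg fun ω => by split_ifs <;> positivity
  have hβ : ∀ i l, 0 ≤ β i l := fun i l => integral_nonneg fun ω => sq_nonneg _
  have hσ : ∀ l, 0 ≤ σ l := fun l =>
    mul_nonneg (by positivity) (Finset.sum_nonneg fun i _ => hβ i l)
  have htail : ∀ l, √((n : ℝ)⁻¹ * ∑ i, α i l) ≤ φ * √(σ l) := fun l =>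
    calc √((n : ℝ)⁻¹ * ∑ i, α i l) ≤ √(φ ^ 2 * σ l) := Real.sqrt_le_sqrt (hφ2 l)
      _ = φ * √(σ l) := by rw [Real.sqrt_mul (sq_nonneg φ), Real.sqrt_sq hφ]
  have hamgm : 2 * √(σ j) * √(σ k) ≤ σ j + σ k := by
    simpa only [Real.sq_sqrt (hσ j), Real.sq_sqrt (hσ k)] using two_mul_le_add_sq √(σ j) √(σ k)
  calc (n : ℝ)⁻¹ * ∑ i, ∫ ω, |truncVar μ n p x u i j ω * truncVar μ n p x u i k ω -
        x i j ω * x i k ω| ∂μ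
      ≤ (n : ℝ)⁻¹ * ∑ i, (√(α i j) * √(β i k) + √(β i j) * √(α i k)) := by
        gcongr with i
        exact integral_abs_centeredTruncAt_mul_sub_mul_le (hL2 i j) (hL2 i k) (hcen i j)
          (hcen i k) _ _
    _ ≤ √((n : ℝ)⁻¹ * ∑ i, α i j) * √(σ k) + √(σ j) * √((n : ℝ)⁻¹ * ∑ i, α i k) := by
        rw [Finset.sum_add_distrib, mul_add]
        exact add_le_add (Finset.mul_sum_sqrt_mul_sqrt_le _ (by positivity) (hα · j) (hβ · k))
          (Finset.mul_sum_sqrt_mul_sqrt_le _ (by positivity) (hβ · j) (hα · k))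
    _ ≤ φ * √(σ j) * √(σ k) + √(σ j) * (φ * √(σ k)) := by gcongr <;> exact htail _
    _ ≤ 3 / 2 * (σ j + σ k) * φ := by
        nlinarith [mul_le_mul_of_nonneg_left hamgm hφ, hσ j, hσ k]

/-- Truncation impact on second moments: for every `j, k`,
`Ē[|x̃_{ij} x̃_{ik} − x_{ij} x_{ik}|] ≤ (3/2)(Ē[x_{ij}²] + Ē[x_{ik}²]) φ(u)`,
where `φ(u) ≥ 0` satisfies
`Ē[x_{ij}² 1{|x_{ij}| > u (Ē[x_{ij}²])^{1/2}}] ≤ φ(u)² Ē[x_{ij}²]` for all `j`. -/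
theorem truncation_second_moment_impact {Ω : Type*} [MeasurableSpace Ω]
    (μ : Measure Ω) [IsProbabilityMeasure μ] (n p : ℕ) (hn : 0 < n)
    (x : Fin n → Fin p → Ω → ℝ)
    (hmeas : ∀ i j, Measurable (x i j))
    (hcen : ∀ i j, ∫ ω, x i j ω ∂μ = 0)
    (hint1 : ∀ i j, Integrable (x i j) μ)
    (hint2 : ∀ i j, Integrable (fun ω => (x i j ω) ^ 2) μ)
    (hintp : ∀ i j k, Integrable (fun ω => x i j ω * x i k ω) μ)
    (u : ℝ) (hu : 0 < u) (φ : ℝ) (hφ : 0 ≤ φ)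
    (hφ2 : ∀ j, (n : ℝ)⁻¹ * ∑ i, ∫ ω,
        (if u * Real.sqrt (avgSecondMoment μ n p x j) < |x i j ω|
          then (x i j ω) ^ 2 else 0) ∂μ ≤ φ ^ 2 * avgSecondMoment μ n p x j)
    (j k : Fin p) :
    (n : ℝ)⁻¹ * ∑ i, ∫ ω,
        |truncVar μ n p x u i j ω * truncVar μ n p x u i k ω -
          x i j ω * x i k ω| ∂μ ≤
      (3 / 2) * (avgSecondMoment μ n p x j + avgSecondMoment μ n p x k) * φ :=
  truncation_second_moment_impact_general μ n p x hmeas hcen hint2 u φ hφ hφ2 j k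
end

section
/- Identifiability lower bound via restricted eigenvalue: in the linear regression model with design vectors z_i ∈ ℝ^p, suppose β ∈ ℝ^p has at most s nonzero entries. Then the identifiability factor κ_pr(β) := inf{ max_{1≤j≤p} |E_n[z_{ij}(z_i'δ)]| / ‖δ‖_pr : δ ∈ R(β), ‖δ‖_pr ≠ 0 } satisfies κ_pr(β) ≥ 2⁻¹ s^{−1/2} κ(s,1), where ‖δ‖_pr = (E_n[(z_i'δ)²])^{1/2}, R(β) = {δ : ‖β+δ‖_{ℓ₁} ≤ ‖β‖_{ℓ₁}}, and κ(s,1) is the restricted eigenvalue: κ(s,1) := inf over subsets S of size ≤ s containing the support of β and δ with ‖δ_{S^c}‖_{ℓ₁} ≤ ‖δ_S‖_{ℓ₁} of √s ‖δ‖_pr / ‖δ_S‖_{ℓ₁}. -/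
/-- Empirical prediction seminorm `‖δ‖_pr = (n⁻¹ ∑_i (z_i'δ)²)^{1/2}`. -/
noncomputable def predNorm (n p : ℕ) (z : Fin n → Fin p → ℝ) (δ : Fin p → ℝ) : ℝ :=
  Real.sqrt ((n : ℝ)⁻¹ * ∑ i, (∑ j, z i j * δ j) ^ 2)

/-- `ℓ₁`-norm on `ℝ^p`. -/
noncomputable def l1Norm {p : ℕ} (δ : Fin p → ℝ) : ℝ := ∑ j, |δ j|

/-!
For `δ ∈ R(β)` the cone condition `‖δ_{S₀ᶜ}‖₁ ≤ ‖δ_{S₀}‖₁` holds, so `δ` is admissible for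
`κ(s,1)` and `‖δ‖₁ ≤ 2 ‖δ_{S₀}‖₁`. Writing `‖δ‖_pr² = ∑_j δ_j E_n[z_{ij}(z_i'δ)]` and applying
Hölder's inequality gives `‖δ‖_pr² ≤ 2 ‖δ_{S₀}‖₁ max_j |E_n[z_{ij}(z_i'δ)]|`, which rearranges to
`2⁻¹ s^{-1/2} · √s ‖δ‖_pr / ‖δ_{S₀}‖₁ ≤ max_j |E_n[z_{ij}(z_i'δ)]| / ‖δ‖_pr`. If instead `‖·‖_pr`
vanishes on all of `R(β)`, so that `κ_pr(β)` is an infimum over the empty set, then it vanishes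
everywhere (the linear map `δ ↦ (z_i'δ)_i` vanishes on the `ℓ₁`-ball `R(β)` around `-β`), and
`κ(s,1) ≤ 0`.
-/

open Finset Matrix

noncomputable def restrictedEigenvalue (n p s : ℕ) (z : Fin n → Fin p → ℝ) (β : Fin p → ℝ) : ℝ :=
  sInf {r : ℝ | ∃ δ : Fin p → ℝ, δ ≠ 0 ∧
    ∑ j ∈ univ.filter (fun j => β j = 0), |δ j| ≤ ∑ j ∈ univ.filter (fun j => β j ≠ 0), |δ j| ∧
    r = √s * predNorm n p z δ / ∑ j ∈ univ.filter (fun j => β j ≠ 0), |δ j|}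

/-- The vector `E_n[z_i (z_i'δ)]`, i.e. the empirical Gram matrix applied to `δ`. -/
noncomputable def empiricalGramMulVec (n p : ℕ) (z : Fin n → Fin p → ℝ) (δ : Fin p → ℝ) :
    Fin p → ℝ :=
  fun j => (n : ℝ)⁻¹ * ∑ i, z i j * ∑ k, z i k * δ k

noncomputable def identifiabilityFactor (n p : ℕ) (hp : 0 < p) (z : Fin n → Fin p → ℝ)
    (β : Fin p → ℝ) : ℝ :=
  sInf {r : ℝ | ∃ δ : Fin p → ℝ, l1Norm (β + δ) ≤ l1Norm β ∧ predNorm n p z δ ≠ 0 ∧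
    r = (univ.sup' ⟨⟨0, hp⟩, mem_univ _⟩ fun j => |empiricalGramMulVec n p z δ j|) /
      predNorm n p z δ}

theorem Finset.sum_mul_le_sum_abs_mul_sup'_abs {ι : Type*} (s : Finset ι) (hs : s.Nonempty)
    (a b : ι → ℝ) : ∑ i ∈ s, a i * b i ≤ (∑ i ∈ s, |a i|) * s.sup' hs fun i => |b i| := by
  rw [sum_mul]
  refine sum_le_sum fun i hi => ?_
  calc a i * b i ≤ |a i| * |b i| := (le_abs_self _).trans (abs_mul _ _).le
    _ ≤ |a i| * s.sup' hs fun i => |b i| := by gcongr; exact le_sup' (fun i => |b i|) hi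

section L1Norm

variable {p : ℕ}

theorem l1Norm_nonneg (δ : Fin p → ℝ) : 0 ≤ l1Norm δ :=
  sum_nonneg fun _ _ => abs_nonneg _

theorem l1Norm_eq_zero_iff {δ : Fin p → ℝ} : l1Norm δ = 0 ↔ δ = 0 := by
  simp [l1Norm, sum_eq_zero_iff_of_nonneg, funext_iff]

theorem l1Norm_smul (t : ℝ) (δ : Fin p → ℝ) : l1Norm (t • δ) = |t| * l1Norm δ := by
  simp [l1Norm, abs_mul, mul_sum]

theorem l1Norm_eq_sum_filter_eq_zero_add_sum_filter_ne_zero (β δ : Fin p → ℝ) :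
    l1Norm δ = ∑ j ∈ univ.filter (fun j => β j = 0), |δ j| +
      ∑ j ∈ univ.filter (fun j => β j ≠ 0), |δ j| :=
  (sum_filter_add_sum_filter_not _ _ _).symm

theorem sum_filter_eq_zero_le_sum_filter_ne_zero_of_l1Norm_add_le {β δ : Fin p → ℝ}
    (h : l1Norm (β + δ) ≤ l1Norm β) :
    ∑ j ∈ univ.filter (fun j => β j = 0), |δ j| ≤ ∑ j ∈ univ.filter (fun j => β j ≠ 0), |δ j| := by
  have hβδ : l1Norm (β + δ) = ∑ j ∈ univ.filter (fun j => β j = 0), |δ j| +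
      ∑ j ∈ univ.filter (fun j => β j ≠ 0), |β j + δ j| := by
    rw [l1Norm_eq_sum_filter_eq_zero_add_sum_filter_ne_zero β]
    congr 1
    exact sum_congr rfl fun j hj => by simp [(mem_filter.1 hj).2]
  have hβ : l1Norm β = ∑ j ∈ univ.filter (fun j => β j ≠ 0), |β j| := by
    rw [l1Norm_eq_sum_filter_eq_zero_add_sum_filter_ne_zero β, add_eq_right]
    exact sum_eq_zero fun j hj => by simp [(mem_filter.1 hj).2]
  have htriangle : ∑ j ∈ univ.filter (fun j => β j ≠ 0), |β j| ≤
      ∑ j ∈ univ.filter (fun j => β j ≠ 0), |β j + δ j| +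
        ∑ j ∈ univ.filter (fun j => β j ≠ 0), |δ j| := by
    rw [← sum_add_distrib]
    gcongr with j
    simpa using abs_sub (β j + δ j) (δ j)
  linarith

theorem l1Norm_le_two_mul_sum_filter_ne_zero_of_l1Norm_add_le {β δ : Fin p → ℝ}
    (h : l1Norm (β + δ) ≤ l1Norm β) :
    l1Norm δ ≤ 2 * ∑ j ∈ univ.filter (fun j => β j ≠ 0), |δ j| := by
  have := sum_filter_eq_zero_le_sum_filter_ne_zero_of_l1Norm_add_le h
  rw [l1Norm_eq_sum_filter_eq_zero_add_sum_filter_ne_zero β]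
  linarith

/-- `R(β)` contains `-β` and, after translating by `β`, the `ℓ₁`-sphere of radius `‖β‖₁`. -/
theorem LinearMap.eq_zero_of_forall_l1Norm_add_le {M : Type*} [AddCommGroup M] [Module ℝ M]
    (f : (Fin p → ℝ) →ₗ[ℝ] M) {β : Fin p → ℝ} (hβ : β ≠ 0)
    (hf : ∀ δ, l1Norm (β + δ) ≤ l1Norm β → f δ = 0) : f = 0 := by
  refine LinearMap.ext fun δ => ?_
  rcases eq_or_ne δ 0 with rfl | hδ
  · exact map_zero f
  have hδ₁ : 0 < l1Norm δ := (l1Norm_nonneg δ).lt_of_ne' (l1Norm_eq_zero_iff.not.2 hδ)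
  have hβ₁ : 0 < l1Norm β := (l1Norm_nonneg β).lt_of_ne' (l1Norm_eq_zero_iff.not.2 hβ)
  set t := l1Norm β / l1Norm δ
  have ht : 0 < t := div_pos hβ₁ hδ₁
  have hfβ : f β = 0 := by
    rw [← neg_eq_zero, ← map_neg]
    exact hf _ (by simpa [l1Norm] using l1Norm_nonneg β)
  have hfδ' : f (t • δ - β) = 0 := by
    refine hf _ (le_of_eq ?_)
    rw [add_sub_cancel, l1Norm_smul, abs_of_pos ht, div_mul_cancel₀ _ hδ₁.ne']
  have htδ : t • f δ = 0 := by
    rw [← map_smul, ← sub_add_cancel (t • δ) β, map_add, hfδ', hfβ, add_zero]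
  exact (smul_eq_zero.1 htδ).resolve_left ht.ne'

end L1Norm

section PredNorm

variable {n p : ℕ}

theorem predNorm_nonneg (z : Fin n → Fin p → ℝ) (δ : Fin p → ℝ) : 0 ≤ predNorm n p z δ :=
  Real.sqrt_nonneg _

theorem predNorm_eq_zero_iff (z : Fin n → Fin p → ℝ) (δ : Fin p → ℝ) :
    predNorm n p z δ = 0 ↔ z *ᵥ δ = 0 := by
  rcases Nat.eq_zero_or_pos n with rfl | hn
  · simp [predNorm, eq_iff_true_of_subsingleton]
  rw [predNorm, Real.sqrt_eq_zero (by positivity), mul_eq_zero, or_iff_right (by positivity),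
    sum_eq_zero_iff_of_nonneg fun i _ => sq_nonneg _, funext_iff]
  simp [mulVec, dotProduct]

theorem sq_predNorm_eq_sum_mul_empiricalGramMulVec (z : Fin n → Fin p → ℝ)
    (δ : Fin p → ℝ) : predNorm n p z δ ^ 2 = ∑ j, δ j * empiricalGramMulVec n p z δ j := by
  have hquad : ∑ i, (∑ j, z i j * δ j) ^ 2 = ∑ j, δ j * ∑ i, z i j * ∑ k, z i k * δ k := by
    simp_rw [sq, sum_mul, mul_sum]
    rw [sum_comm]
    exact sum_congr rfl fun j _ => sum_congr rfl fun i _ => sum_congr rfl fun k _ => by ring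
  rw [predNorm, Real.sq_sqrt (by positivity), hquad, mul_sum]
  exact sum_congr rfl fun j _ => by rw [empiricalGramMulVec]; ring

theorem sq_predNorm_le_l1Norm_mul_sup' (z : Fin n → Fin p → ℝ) (δ : Fin p → ℝ)
    (h : (univ : Finset (Fin p)).Nonempty) :
    predNorm n p z δ ^ 2 ≤ l1Norm δ * univ.sup' h fun j => |empiricalGramMulVec n p z δ j| := by
  rw [sq_predNorm_eq_sum_mul_empiricalGramMulVec]
  exact sum_mul_le_sum_abs_mul_sup'_abs univ h _ _

end PredNorm

section IdentifiabilityFactor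

variable {n p : ℕ} {z : Fin n → Fin p → ℝ} {β δ : Fin p → ℝ}

theorem predNorm_div_le_of_l1Norm_add_le (h : (univ : Finset (Fin p)).Nonempty)
    (hR : l1Norm (β + δ) ≤ l1Norm β) (hP : predNorm n p z δ ≠ 0) :
    predNorm n p z δ / (2 * ∑ j ∈ univ.filter (fun j => β j ≠ 0), |δ j|) ≤
      (univ.sup' h fun j => |empiricalGramMulVec n p z δ j|) / predNorm n p z δ := by
  set P := predNorm n p z δ
  set D := ∑ j ∈ univ.filter (fun j => β j ≠ 0), |δ j|
  set M := univ.sup' h fun j => |empiricalGramMulVec n p z δ j|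
  have hP₀ : 0 < P := (predNorm_nonneg z δ).lt_of_ne' hP
  have hM₀ : 0 ≤ M := by
    obtain ⟨j, hj⟩ := h
    exact le_sup'_of_le _ hj (abs_nonneg _)
  have hPM : P ^ 2 ≤ 2 * D * M :=
    (sq_predNorm_le_l1Norm_mul_sup' z δ h).trans
      (mul_le_mul_of_nonneg_right (l1Norm_le_two_mul_sum_filter_ne_zero_of_l1Norm_add_le hR) hM₀)
  have hD₀ : 0 < D := by
    by_contra! hD
    nlinarith
  rw [div_le_div_iff₀ (by positivity) hP₀]
  nlinarith

theorem restrictedEigenvalue_le (s : ℕ) (hδ : δ ≠ 0)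
    (hcone : ∑ j ∈ univ.filter (fun j => β j = 0), |δ j| ≤
      ∑ j ∈ univ.filter (fun j => β j ≠ 0), |δ j|) :
    restrictedEigenvalue n p s z β ≤
      √s * predNorm n p z δ / ∑ j ∈ univ.filter (fun j => β j ≠ 0), |δ j| := by
  refine csInf_le ⟨0, ?_⟩ ⟨δ, hδ, hcone, rfl⟩
  rintro _ ⟨δ, -, -, rfl⟩
  exact div_nonneg (mul_nonneg (Real.sqrt_nonneg _) (predNorm_nonneg z δ))
    (sum_nonneg fun _ _ => abs_nonneg _)

theorem restrictedEigenvalue_nonpos (s : ℕ)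
    (h : ∀ δ, l1Norm (β + δ) ≤ l1Norm β → predNorm n p z δ = 0) :
    restrictedEigenvalue n p s z β ≤ 0 := by
  refine Real.sInf_nonpos ?_
  rintro _ ⟨δ, -, -, rfl⟩
  rcases eq_or_ne β 0 with rfl | hβ
  · simp -- `S₀ = ∅`, so the ratio is a division by `0`
  have hz : mulVecLin z = 0 :=
    LinearMap.eq_zero_of_forall_l1Norm_add_le _ hβ fun δ hδ => (predNorm_eq_zero_iff z δ).1 (h δ hδ)
  rw [(predNorm_eq_zero_iff z δ).2 (LinearMap.congr_fun hz δ), mul_zero, zero_div]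

theorem identifiabilityFactor_nonneg (hp : 0 < p) : 0 ≤ identifiabilityFactor n p hp z β := by
  refine Real.sInf_nonneg ?_
  rintro _ ⟨δ, -, -, rfl⟩
  exact div_nonneg (le_sup'_of_le _ (mem_univ ⟨0, hp⟩) (abs_nonneg _)) (predNorm_nonneg z δ)

end IdentifiabilityFactor

theorem identifiability_factor_RE_bound_general (n p s : ℕ) (hp : 0 < p)
    (z : Fin n → Fin p → ℝ) (β : Fin p → ℝ) :
    2⁻¹ * (Real.sqrt s)⁻¹ *
        sInf {r : ℝ | ∃ δ : Fin p → ℝ, δ ≠ 0 ∧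
          (∑ j ∈ Finset.univ.filter (fun j => β j = 0), |δ j|) ≤
            (∑ j ∈ Finset.univ.filter (fun j => β j ≠ 0), |δ j|) ∧
          r = Real.sqrt s * predNorm n p z δ /
            (∑ j ∈ Finset.univ.filter (fun j => β j ≠ 0), |δ j|)} ≤
      sInf {r : ℝ | ∃ δ : Fin p → ℝ,
        l1Norm (β + δ) ≤ l1Norm β ∧ predNorm n p z δ ≠ 0 ∧
        r = (Finset.univ.sup' ⟨⟨0, hp⟩, Finset.mem_univ _⟩ fun j =>
            |(n : ℝ)⁻¹ * ∑ i, z i j * (∑ k, z i k * δ k)|) /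
          predNorm n p z δ} := by
  change 2⁻¹ * (√s)⁻¹ * restrictedEigenvalue n p s z β ≤ identifiabilityFactor n p hp z β
  have hc : 0 ≤ 2⁻¹ * (√s)⁻¹ := by positivity
  by_cases hB : ∃ δ, l1Norm (β + δ) ≤ l1Norm β ∧ predNorm n p z δ ≠ 0
  swap
  · push Not at hB
    exact (mul_nonpos_of_nonneg_of_nonpos hc (restrictedEigenvalue_nonpos s hB)).trans
      (identifiabilityFactor_nonneg hp)
  obtain ⟨δ₀, hR₀, hP₀⟩ := hB
  refine le_csInf ⟨_, δ₀, hR₀, hP₀, rfl⟩ ?_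
  rintro _ ⟨δ, hR, hP, rfl⟩
  have hδ : δ ≠ 0 := by
    rintro rfl
    exact hP ((predNorm_eq_zero_iff z 0).2 (mulVec_zero z))
  set D := ∑ j ∈ univ.filter (fun j => β j ≠ 0), |δ j|
  have hPD : 0 ≤ predNorm n p z δ / D :=
    div_nonneg (predNorm_nonneg z δ) (sum_nonneg fun _ _ => abs_nonneg _)
  calc 2⁻¹ * (√s)⁻¹ * restrictedEigenvalue n p s z β
      ≤ 2⁻¹ * (√s)⁻¹ * (√s * predNorm n p z δ / D) :=
        mul_le_mul_of_nonneg_left (restrictedEigenvalue_le s hδ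
          (sum_filter_eq_zero_le_sum_filter_ne_zero_of_l1Norm_add_le hR)) hc
    _ = 2⁻¹ * ((√s)⁻¹ * √s) * (predNorm n p z δ / D) := by ring
    _ ≤ 2⁻¹ * 1 * (predNorm n p z δ / D) := by gcongr; exact inv_mul_le_one
    _ = predNorm n p z δ / (2 * D) := by ring
    _ ≤ _ := predNorm_div_le_of_l1Norm_add_le _ hR hP

/-- Identifiability lower bound via restricted eigenvalue: if `β`
has at most `s` nonzero entries, then the identifiability factor
`κ_pr(β) = inf { max_j |E_n[z_{ij}(z_i'δ)]| / ‖δ‖_pr : δ ∈ R(β), ‖δ‖_pr ≠ 0 }`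
satisfies `κ_pr(β) ≥ 2⁻¹ s^{−1/2} κ(s,1)`, where `R(β) = {δ : ‖β+δ‖₁ ≤ ‖β‖₁}` and
`κ(s,1) = inf { √s ‖δ‖_pr / ‖δ_{S₀}‖₁ : ‖δ_{S₀ᶜ}‖₁ ≤ ‖δ_{S₀}‖₁, δ ≠ 0 }` with `S₀`
the support of `β`. -/
theorem identifiability_factor_RE_bound (n p s : ℕ) (hn : 0 < n) (hp : 0 < p)
    (z : Fin n → Fin p → ℝ) (β : Fin p → ℝ)
    (hsparse : (Finset.univ.filter fun j => β j ≠ 0).card ≤ s) :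
    2⁻¹ * (Real.sqrt s)⁻¹ *
        sInf {r : ℝ | ∃ δ : Fin p → ℝ, δ ≠ 0 ∧
          (∑ j ∈ Finset.univ.filter (fun j => β j = 0), |δ j|) ≤
            (∑ j ∈ Finset.univ.filter (fun j => β j ≠ 0), |δ j|) ∧
          r = Real.sqrt s * predNorm n p z δ /
            (∑ j ∈ Finset.univ.filter (fun j => β j ≠ 0), |δ j|)} ≤
      sInf {r : ℝ | ∃ δ : Fin p → ℝ,
        l1Norm (β + δ) ≤ l1Norm β ∧ predNorm n p z δ ≠ 0 ∧
        r = (Finset.univ.sup' ⟨⟨0, hp⟩, Finset.mem_univ _⟩ fun j =>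
            |(n : ℝ)⁻¹ * ∑ i, z i j * (∑ k, z i k * δ k)|) /
          predNorm n p z δ} :=
  identifiability_factor_RE_bound_general n p s hp z β
end

section
/- Stepdown procedure family-wise error reduction: suppose critical values c_{1−α,w} for nonempty subsets w ⊆ {1,…,p} satisfy the monotonicity c_{1−α,w'} ≤ c_{1−α,w''} whenever w' ⊆ w''. If w is the set of true null hypotheses and the stepdown procedure rejects at least one true null hypothesis, then max_{j∈w} t_j > c_{1−α,w}. Consequently, the probability of rejecting at least one true null is at most Pr(max_{j∈w} t_j > c_{1−α,w}). -/
/-! Consider the first step `l₀` at which a true null is rejected. No true null was rejected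
before, so `w ⊆ w(l₀)`, and monotonicity of the critical values gives
`c_w ≤ c_{w(l₀)} < t_j ≤ max_{j ∈ w} t_j`. The probability bound is then monotonicity of `μ`. -/

open MeasureTheory

/-- The sets of non-rejected hypotheses along the stepdown procedure of
Romano–Wolf: `w(1) = {1,…,p}`, and `w(l+1)` consists of the hypotheses in `w(l)`
that are not rejected at step `l` (i.e. those with `t_j ≤ c_{1−α, w(l)}`). -/
noncomputable def stepdownSets {p : ℕ} (t : Fin p → ℝ) (c : Finset (Fin p) → ℝ) :
    ℕ → Finset (Fin p)
  | 0 => Finset.univ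
  | l + 1 => (stepdownSets t c l).filter fun j => t j ≤ c (stepdownSets t c l)

namespace stepdownSets

variable {p : ℕ} (t : Fin p → ℝ) (c : Finset (Fin p) → ℝ)

theorem exists_rejected_of_notMem {k : Fin p} {l : ℕ} (hk : k ∉ stepdownSets t c l) :
    ∃ l' < l, k ∈ stepdownSets t c l' ∧ c (stepdownSets t c l') < t k := by
  induction l with
  | zero => exact absurd (Finset.mem_univ k) hk
  | succ l ih =>
    by_cases hkl : k ∈ stepdownSets t c l
    · simp only [stepdownSets, Finset.mem_filter, not_and, not_le] at hk
      exact ⟨l, l.lt_succ_self, hkl, hk hkl⟩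
    · obtain ⟨l', hl', hkl', hrej⟩ := ih hkl
      exact ⟨l', hl'.trans l.lt_succ_self, hkl', hrej⟩

theorem lt_sup'_of_rejects {w : Finset (Fin p)} (hw : w.Nonempty)
    (hc : ∀ w' w'' : Finset (Fin p), w'.Nonempty → w' ⊆ w'' → c w' ≤ c w'')
    (hrej : ∃ (l : ℕ) (j : Fin p), j ∈ w ∧ j ∈ stepdownSets t c l ∧
      c (stepdownSets t c l) < t j) :
    c w < w.sup' hw t := by
  obtain ⟨j, hjw, hjl, hjt⟩ := Nat.find_spec hrej
  have hsub : w ⊆ stepdownSets t c (Nat.find hrej) := by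
    intro k hkw
    by_contra hkl
    obtain ⟨l', hl', hkl', hrej'⟩ := exists_rejected_of_notMem t c hkl
    exact Nat.find_min hrej hl' ⟨k, hkw, hkl', hrej'⟩
  calc c w ≤ c (stepdownSets t c (Nat.find hrej)) := hc w _ hw hsub
    _ < t j := hjt
    _ ≤ w.sup' hw t := Finset.le_sup' t hjw

end stepdownSets

theorem stepdown_fwer_reduction_general {Ω : Type*} [MeasurableSpace Ω]
    (μ : Measure Ω) (p : ℕ)
    (t : Ω → Fin p → ℝ) (c : Ω → Finset (Fin p) → ℝ)
    (hc : ∀ (ω : Ω) (w' w'' : Finset (Fin p)), w'.Nonempty → w' ⊆ w'' →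
      c ω w' ≤ c ω w'')
    (w : Finset (Fin p)) (hw : w.Nonempty) :
    (∀ ω : Ω,
      (∃ (l : ℕ) (j : Fin p), j ∈ w ∧ j ∈ stepdownSets (t ω) (c ω) l ∧
        c ω (stepdownSets (t ω) (c ω) l) < t ω j) →
      c ω w < w.sup' hw (t ω)) ∧
    μ {ω | ∃ (l : ℕ) (j : Fin p), j ∈ w ∧ j ∈ stepdownSets (t ω) (c ω) l ∧
        c ω (stepdownSets (t ω) (c ω) l) < t ω j} ≤
      μ {ω | c ω w < w.sup' hw (t ω)} :=
  have rejects_imp (ω : Ω) := stepdownSets.lt_sup'_of_rejects (t ω) (c ω) hw (hc ω)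
  ⟨rejects_imp, measure_mono rejects_imp⟩

/-- Stepdown family-wise error reduction: if the critical values are
monotone (`c_{1−α,w'} ≤ c_{1−α,w''}` whenever `w' ⊆ w''`, `w'` nonempty) and the
stepdown procedure rejects at least one true null hypothesis (some `j` in the true
null set `w` with `j ∈ w(l)` and `t_j > c_{1−α,w(l)}` at some step `l`), then
`max_{j∈w} t_j > c_{1−α,w}`; consequently the probability of rejecting at least
one true null is at most `Pr(max_{j∈w} t_j > c_{1−α,w})`. -/
theorem stepdown_fwer_reduction {Ω : Type*} [MeasurableSpace Ω]
    (μ : Measure Ω) [IsProbabilityMeasure μ] (p : ℕ)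
    (t : Ω → Fin p → ℝ) (c : Ω → Finset (Fin p) → ℝ)
    (hc : ∀ (ω : Ω) (w' w'' : Finset (Fin p)), w'.Nonempty → w' ⊆ w'' →
      c ω w' ≤ c ω w'')
    (w : Finset (Fin p)) (hw : w.Nonempty) :
    (∀ ω : Ω,
      (∃ (l : ℕ) (j : Fin p), j ∈ w ∧ j ∈ stepdownSets (t ω) (c ω) l ∧
        c ω (stepdownSets (t ω) (c ω) l) < t ω j) →
      c ω w < w.sup' hw (t ω)) ∧
    μ {ω | ∃ (l : ℕ) (j : Fin p), j ∈ w ∧ j ∈ stepdownSets (t ω) (c ω) l ∧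
        c ω (stepdownSets (t ω) (c ω) l) < t ω j} ≤
      μ {ω | c ω w < w.sup' hw (t ω)} :=
  stepdown_fwer_reduction_general μ p t c hc w hw
end
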